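/- For every positive integer m, every real ε with 0 < ε ≤ 1/2, and every complex number z with |z| ≤ 1 - ε, one has log|Φ_m(z)| ≥ -2^{ω(m)} · log(1/ε). -/

import Mathlib

open Polynomial Finset ArithmeticFunction
open scoped ArithmeticFunction.Moebius

/-!
Möbius inversion of `∏_{d ∣ k} Φ_d = X ^ k - 1` gives
`log |Φ_m(z)| = ∑_{d k = m} μ(d) log |z ^ k - 1|`. For `|z| ≤ 1 - ε` every `|z ^ k - 1|` lies in
`[ε, 2] ⊆ [ε, 1/ε]`, so each term has absolute value at most `log (1/ε)`, and exactly
`2 ^ ω(m)` of the `μ(d)` are nonzero, namely those of the squarefree divisors `d` of `m`.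
-/

theorem Nat.card_divisors_filter_squarefree {n : ℕ} (hn : n ≠ 0) :
    #{d ∈ n.divisors | Squarefree d} = 2 ^ #n.primeFactors := by
  rw [card_eq_sum_ones, Nat.sum_divisors_filter_squarefree hn, ← card_eq_sum_ones, card_powerset,
    Nat.factors_eq]
  rfl

theorem abs_sum_moebius_mul_le {n : ℕ} (hn : n ≠ 0) {g : ℕ → ℝ} {L : ℝ}
    (hg : ∀ k ∈ n.divisors, |g k| ≤ L) :
    |∑ x ∈ n.divisorsAntidiagonal, (μ x.1 : ℝ) * g x.2| ≤ 2 ^ #n.primeFactors * L := by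
  have hL : 0 ≤ L := (abs_nonneg _).trans (hg 1 (Nat.one_mem_divisors.mpr hn))
  calc |∑ x ∈ n.divisorsAntidiagonal, (μ x.1 : ℝ) * g x.2|
      ≤ ∑ x ∈ n.divisorsAntidiagonal, |(μ x.1 : ℝ)| * L := by
        refine (abs_sum_le_sum_abs _ _).trans (sum_le_sum fun x hx => ?_)
        rw [abs_mul]
        exact mul_le_mul_of_nonneg_left (hg _ (Nat.snd_mem_divisors_of_mem_antidiagonal hx))
          (abs_nonneg _)
    _ = ∑ d ∈ n.divisors with Squarefree d, L := by
        rw [Nat.sum_divisorsAntidiagonal (fun d _ => |(μ d : ℝ)| * L), sum_filter]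
        refine sum_congr rfl fun d _ => ?_
        rw [← Int.cast_abs, abs_moebius]
        split_ifs <;> simp
    _ = 2 ^ #n.primeFactors * L := by
        rw [sum_const, Nat.card_divisors_filter_squarefree hn, nsmul_eq_mul, Nat.cast_pow,
          Nat.cast_ofNat]

theorem log_norm_cyclotomic_eval_eq_sum_moebius {K : Type*} [NormedField K] {z : K}
    (hz : ∀ k, 0 < k → z ^ k ≠ 1) {n : ℕ} (hn : 0 < n) :
    Real.log ‖(cyclotomic n K).eval z‖ =
      ∑ x ∈ n.divisorsAntidiagonal, (μ x.1 : ℝ) * Real.log ‖z ^ x.2 - 1‖ := by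
  refine ((sum_eq_iff_sum_mul_moebius_eq (f := fun d => Real.log ‖(cyclotomic d K).eval z‖)
    (g := fun k => Real.log ‖z ^ k - 1‖)).mp (fun k hk => ?_) n hn).symm
  have hprod : ∏ d ∈ k.divisors, ‖(cyclotomic d K).eval z‖ = ‖z ^ k - 1‖ := by
    rw [← norm_prod, ← eval_prod, prod_cyclotomic_eq_X_pow_sub_one hk]
    simp
  have hne : ∏ d ∈ k.divisors, ‖(cyclotomic d K).eval z‖ ≠ 0 := by
    rw [hprod, norm_ne_zero_iff, sub_ne_zero]
    exact hz k hk
  rw [← hprod, Real.log_prod (prod_ne_zero_iff.mp hne)]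

section NormPowSubOne

variable {R : Type*} [SeminormedRing R] [NormOneClass R] {z : R}

theorem one_sub_norm_le_norm_pow_sub_one (hz : ‖z‖ ≤ 1) {k : ℕ} (hk : k ≠ 0) :
    1 - ‖z‖ ≤ ‖z ^ k - 1‖ := by
  have hpow : ‖z ^ k‖ ≤ ‖z‖ :=
    (norm_pow_le' z (Nat.pos_of_ne_zero hk)).trans (pow_le_of_le_one (norm_nonneg z) hz hk)
  have := norm_sub_norm_le (1 : R) (z ^ k)
  rw [norm_one, norm_sub_rev] at this
  linarith

theorem norm_pow_sub_one_le_two (hz : ‖z‖ ≤ 1) (k : ℕ) : ‖z ^ k - 1‖ ≤ 2 := by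
  have hpow : ‖z ^ k‖ ≤ 1 := (norm_pow_le z k).trans (pow_le_one₀ (norm_nonneg z) hz)
  have := norm_sub_le (z ^ k) 1
  rw [norm_one] at this
  linarith

end NormPowSubOne

theorem Real.abs_log_le_log_one_div {ε x : ℝ} (hε : 0 < ε) (hεx : ε ≤ x) (hx : x ≤ 1 / ε) :
    |Real.log x| ≤ Real.log (1 / ε) := by
  refine abs_le.mpr ⟨?_, Real.log_le_log (hε.trans_le hεx) hx⟩
  rw [one_div, Real.log_inv, neg_neg]
  exact Real.log_le_log hε hεx

/-- For every positive integer `m`, every `0 < ε ≤ 1/2`, and every complex `z` with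
`|z| ≤ 1 - ε`, one has `log |Φ_m(z)| ≥ -2 ^ ω(m) · log (1/ε)`. -/
theorem cyclotomic_log_abs_lower (m : ℕ) (hm : 0 < m) (ε : ℝ) (hε : 0 < ε)
    (hε' : ε ≤ 1 / 2) (z : ℂ) (hz : ‖z‖ ≤ 1 - ε) :
    -(2 ^ m.primeFactors.card : ℝ) * Real.log (1 / ε) ≤
      Real.log ‖(Polynomial.cyclotomic m ℂ).eval z‖ := by
  have hz1 : ‖z‖ ≤ 1 := by linarith
  have hlow : ∀ k, 0 < k → ε ≤ ‖z ^ k - 1‖ := fun k hk =>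
    (le_sub_comm.mp hz).trans (one_sub_norm_le_norm_pow_sub_one hz1 hk.ne')
  have hroot : ∀ k, 0 < k → z ^ k ≠ 1 := fun k hk h => by
    have := hlow k hk
    rw [h, sub_self, norm_zero] at this
    linarith
  have hup : (2 : ℝ) ≤ 1 / ε := by
    rw [le_div_iff₀ hε]; linarith
  rw [log_norm_cyclotomic_eval_eq_sum_moebius hroot hm, neg_mul]
  exact neg_le_of_abs_le <| abs_sum_moebius_mul_le hm.ne' fun k hk =>
    Real.abs_log_le_log_one_div hε (hlow k (Nat.pos_of_mem_divisors hk))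
      ((norm_pow_sub_one_le_two hz1 k).trans hup)
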